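/- Let (Y,w) be a relative t-design in H(n,2) with respect to u₀ = (0,…,0). Then for every 0 ≤ j ≤ t there is a constant λ_j such that for every u ∈ X with |ū| = j, Σ_{y ∈ Y, ū ⊆ ȳ} w(y) = λ_j; that is, the weighted number of elements of Y whose support contains a fixed j-subset of coordinates depends only on j, for all j ≤ t (so (Y,w) is a regular t-wise balanced design). -/

import Mathlib

open Finset

/-- The vertex set of the binary Hamming scheme `H(n,2)`. -/
abbrev X (n : ℕ) := Fin n → Bool

/-- The fixed base point `u₀ = (0,…,0)`. -/
def u₀ (n : ℕ) : X n := fun _ => false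

/-- The `r`-th shell `X_r = {x : d(u₀,x) = r}`. -/
def shell (n r : ℕ) : Finset (X n) :=
  Finset.univ.filter (fun x => hammingDist (u₀ n) x = r)

/-- The Krawtchouk polynomial `Q_j(u)` for `H(n,2)`. -/
noncomputable def Q (n j u : ℕ) : ℝ :=
  ∑ i ∈ Finset.range (j + 1),
    (-1 : ℝ) ^ i * ((n - u).choose (j - i) : ℝ) * (u.choose i : ℝ)

/-- The total weight `W_r = Σ_{y ∈ Y ∩ X_r} w(y)`. -/
noncomputable def Wt (n : ℕ) (Y : Finset (X n)) (w : X n → ℝ) (r : ℕ) : ℝ :=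
  ∑ y ∈ Y.filter (fun y => hammingDist (u₀ n) y = r), w y

/-- `(Y,w)` is a relative `t`-design of `H(n,2)` with respect to `u₀ = (0,…,0)`,
supported on the shells `X_r`, `r ∈ R`: `Y` lies in the union of these shells,
meets each of them, has positive weights, and the design identity holds for all
Krawtchouk functions of degree `j ≤ t`. -/
def IsRelativeDesign (n t : ℕ) (Y : Finset (X n)) (w : X n → ℝ) (R : Finset ℕ) : Prop :=
  (∀ y ∈ Y, hammingDist (u₀ n) y ∈ R) ∧
  (∀ r ∈ R, ∃ y ∈ Y, hammingDist (u₀ n) y = r) ∧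
  (∀ y ∈ Y, 0 < w y) ∧
  (∀ j ≤ t, ∀ u : X n,
    ∑ r ∈ R, Wt n Y w r / (n.choose r : ℝ) * ∑ x ∈ shell n r, Q n j (hammingDist u x)
      = ∑ y ∈ Y, w y * Q n j (hammingDist u y))

/-- The support `x̄ = {i : x_i = 1}` of a binary vector. -/
def supp (n : ℕ) (x : X n) : Finset (Fin n) :=
  Finset.univ.filter (fun i => x i = true)

/-! auxiliary -/
open symmDiff

noncomputable def eps {n : ℕ} (A B : Finset (Fin n)) : ℝ := (-1) ^ (A ∩ B).card

lemma supp_injective (n : ℕ) : Function.Injective (supp n) := by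
  intro x y h
  funext i
  have : (i ∈ supp n x) = (i ∈ supp n y) := by rw [h]
  simp [supp] at this
  rcases Bool.eq_false_or_eq_true (x i) with hx | hx <;>
    rcases Bool.eq_false_or_eq_true (y i) with hy | hy <;> simp_all

lemma hammingDist_eq_card_symmDiff {n : ℕ} (u v : X n) :
    hammingDist u v = (supp n u ∆ supp n v).card := by
  classical
  rw [hammingDist]
  congr 1
  ext i
  simp only [mem_filter, mem_univ, true_and, mem_symmDiff, supp, ne_eq]
  rcases Bool.eq_false_or_eq_true (u i) with hx | hx <;>
    rcases Bool.eq_false_or_eq_true (v i) with hy | hy <;> simp_all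

lemma wt_eq_card_supp {n : ℕ} (x : X n) : hammingDist (u₀ n) x = (supp n x).card := by
  rw [hammingDist_eq_card_symmDiff]
  have : supp n (u₀ n) = ∅ := by
    ext i; simp [supp, u₀]
  rw [this]; rw [show (∅ : Finset (Fin n)) = ⊥ from rfl, bot_symmDiff]

lemma mem_shell_iff {n r : ℕ} (x : X n) : x ∈ shell n r ↔ (supp n x).card = r := by
  simp [shell, wt_eq_card_supp]

/-- card of symmDiff parity -/
lemma card_symmDiff_eq {α : Type*} [DecidableEq α] (P Q : Finset α) :
    (P ∆ Q).card + 2 * (P ∩ Q).card = P.card + Q.card := by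
  have h1 := Finset.card_inter_add_card_sdiff P Q
  have h2 := Finset.card_inter_add_card_sdiff Q P
  have h3 : (P ∆ Q).card = (P \ Q).card + (Q \ P).card := by
    rw [symmDiff_def, Finset.sup_eq_union, Finset.card_union_of_disjoint disjoint_sdiff_sdiff]
  have h4 : (Q ∩ P).card = (P ∩ Q).card := by rw [Finset.inter_comm]
  omega

lemma eps_symmDiff {n : ℕ} (A U V : Finset (Fin n)) :
    eps A (U ∆ V) = eps A U * eps A V := by
  unfold eps
  rw [show A ∩ (U ∆ V) = (A ∩ U) ∆ (A ∩ V) from by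
    simpa [Finset.inf_eq_inter] using inf_symmDiff_distrib_left (a := A) (b := U) (c := V)]
  rw [← pow_add]
  have h := card_symmDiff_eq (A ∩ U) (A ∩ V)
  rw [neg_one_pow_eq_pow_mod_two, neg_one_pow_eq_pow_mod_two (n := (A ∩ U).card + (A ∩ V).card)]
  congr 1
  omega

lemma supp_of_mem {n : ℕ} (A : Finset (Fin n)) :
    supp n (fun i => decide (i ∈ A)) = A := by
  ext i; simp [supp]

/-- transfer a sum over a shell to a sum over `powersetCard`. -/
lemma sum_shell_to_powersetCard {n m : ℕ} (f : Finset (Fin n) → ℝ) :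
    ∑ x ∈ shell n m, f (supp n x)
      = ∑ A ∈ Finset.powersetCard m (Finset.univ : Finset (Fin n)), f A := by
  classical
  refine Finset.sum_nbij' (fun x => supp n x) (fun A => fun i => decide (i ∈ A))
    ?_ ?_ ?_ ?_ ?_
  · intro x hx
    rw [Finset.mem_powersetCard]
    exact ⟨Finset.subset_univ _, ((mem_shell_iff x).1 hx)⟩
  · intro A hA
    rw [Finset.mem_powersetCard] at hA
    rw [mem_shell_iff, supp_of_mem]
    exact hA.2
  · intro x _
    funext i
    have : (i ∈ supp n x) ↔ x i = true := by simp [supp]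
    by_cases h : x i = true <;> simp [h, this]
  · intro A _
    exact supp_of_mem A
  · intro x _; rfl

/-- the key counting identity. -/
lemma sum_powersetCard_eps {n : ℕ} (m : ℕ) (Z : Finset (Fin n)) :
    ∑ A ∈ Finset.powersetCard m (Finset.univ : Finset (Fin n)), (-1 : ℝ) ^ (A ∩ Z).card
      = Q n m Z.card := by
  classical
  have hstep : ∑ A ∈ Finset.powersetCard m (Finset.univ : Finset (Fin n)),
      (-1 : ℝ) ^ (A ∩ Z).card
      = ∑ p ∈ (Finset.range (m + 1)).sigma
          (fun i => Finset.powersetCard i Z ×ˢ Finset.powersetCard (m - i) Zᶜ),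
          (-1 : ℝ) ^ p.2.1.card := by
    refine Finset.sum_nbij' (fun A => ⟨(A ∩ Z).card, (A ∩ Z, A \ Z)⟩)
      (fun p => p.2.1 ∪ p.2.2) ?_ ?_ ?_ ?_ ?_
    · intro A hA
      rw [Finset.mem_powersetCard] at hA
      have hcard := Finset.card_inter_add_card_sdiff A Z
      simp only [Finset.mem_sigma, Finset.mem_product, Finset.mem_powersetCard,
        Finset.mem_powersetCard, Finset.mem_range]
      refine ⟨by omega, ⟨Finset.inter_subset_right, trivial⟩, ⟨?_, by omega⟩⟩
      intro x hx
      rw [Finset.mem_compl]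
      exact (Finset.mem_sdiff.1 hx).2
    · rintro ⟨i, B, C⟩ hp
      rw [Finset.mem_sigma, Finset.mem_product, Finset.mem_powersetCard,
        Finset.mem_powersetCard, Finset.mem_range] at hp
      obtain ⟨hi, ⟨hBZ, hB⟩, ⟨hCZ, hC⟩⟩ := hp
      rw [Finset.mem_powersetCard]
      have hdisj : Disjoint B C := by
        refine Finset.disjoint_left.2 fun x hxB hxC => ?_
        exact (Finset.mem_compl.1 (hCZ hxC)) (hBZ hxB)
      refine ⟨Finset.subset_univ _, ?_⟩
      rw [Finset.card_union_of_disjoint hdisj, hB, hC]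
      omega
    · intro A _
      show A ∩ Z ∪ A \ Z = A
      rw [Finset.union_comm, Finset.sdiff_union_inter]
    · rintro ⟨i, B, C⟩ hp
      dsimp only
      rw [Finset.mem_sigma, Finset.mem_product, Finset.mem_powersetCard,
        Finset.mem_powersetCard, Finset.mem_range] at hp
      obtain ⟨hi, ⟨hBZ, hB⟩, ⟨hCZ, hC⟩⟩ := hp
      have h1 : (B ∪ C) ∩ Z = B := by
        ext x
        simp only [Finset.mem_inter, Finset.mem_union]
        constructor
        · rintro ⟨hx1 | hx1, hx2⟩
          · exact hx1
          · exact absurd hx2 (Finset.mem_compl.1 (hCZ hx1))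
        · intro hx; exact ⟨Or.inl hx, hBZ hx⟩
      have h2 : (B ∪ C) \ Z = C := by
        ext x
        simp only [Finset.mem_sdiff, Finset.mem_union]
        constructor
        · rintro ⟨hx1 | hx1, hx2⟩
          · exact absurd (hBZ hx1) hx2
          · exact hx1
        · intro hx; exact ⟨Or.inr hx, Finset.mem_compl.1 (hCZ hx)⟩
      simp only [h1, h2, hB]
    · intro A _; rfl
  rw [hstep, Finset.sum_sigma]
  unfold Q
  refine Finset.sum_congr rfl fun i hi => ?_
  rw [Finset.sum_product]
  calc ∑ B ∈ Finset.powersetCard i Z, ∑ C ∈ Finset.powersetCard (m - i) Zᶜ,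
        (-1 : ℝ) ^ B.card
      = ∑ B ∈ Finset.powersetCard i Z, ∑ _C ∈ Finset.powersetCard (m - i) Zᶜ,
        (-1 : ℝ) ^ i := by
        refine Finset.sum_congr rfl fun B hB => ?_
        rw [(Finset.mem_powersetCard.1 hB).2]
    _ = ((Z.card.choose i : ℝ) * ((n - Z.card).choose (m - i) : ℝ)) * (-1 : ℝ) ^ i := by
        rw [Finset.sum_const, Finset.sum_const, Finset.card_powersetCard,
          Finset.card_powersetCard, Finset.card_compl]
        simp [Finset.card_univ, nsmul_eq_mul]
        ring
    _ = (-1 : ℝ) ^ i * ((n - Z.card).choose (m - i) : ℝ) * (Z.card.choose i : ℝ) := by ring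

/-- Lemma S+L1: character sum over a shell. -/
lemma sum_shell_eps {n m : ℕ} (Z : Finset (Fin n)) :
    ∑ x ∈ shell n m, eps (supp n x) Z = Q n m Z.card := by
  rw [show (fun x => eps (supp n x) Z) = (fun x => (fun A => (-1 : ℝ) ^ (A ∩ Z).card) (supp n x))
    from rfl]
  rw [sum_shell_to_powersetCard (fun A => (-1 : ℝ) ^ (A ∩ Z).card)]
  exact sum_powersetCard_eps m Z

/-- orthogonality -/
lemma eps_comm {n : ℕ} (A B : Finset (Fin n)) : eps A B = eps B A := by
  unfold eps; rw [Finset.inter_comm]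

lemma eps_prod {n : ℕ} (W : Finset (Fin n)) (u : X n) :
    ∏ i : Fin n, (if i ∈ W then (if u i then (-1 : ℝ) else 1) else 1)
      = eps W (supp n u) := by
  rw [Finset.prod_ite_mem, Finset.univ_inter]
  calc ∏ i ∈ W, (if u i then (-1 : ℝ) else 1)
      = ∏ i ∈ W.filter (fun i => u i = true), (-1 : ℝ) := (Finset.prod_filter _ _).symm
    _ = (-1 : ℝ) ^ (W.filter (fun i => u i = true)).card := Finset.prod_const _
    _ = eps W (supp n u) := by
        unfold eps; congr 2; ext i; simp [supp]

lemma sum_eps {n : ℕ} (W : Finset (Fin n)) :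
    ∑ u : X n, eps W (supp n u) = if W = ∅ then (2 : ℝ) ^ n else 0 := by
  classical
  calc ∑ u : X n, eps W (supp n u)
      = ∑ u : X n, ∏ i : Fin n, (if i ∈ W then (if u i then (-1 : ℝ) else 1) else 1) :=
        Finset.sum_congr rfl fun u _ => (eps_prod W u).symm
    _ = ∏ i : Fin n, ∑ b : Bool, (if i ∈ W then (if b then (-1 : ℝ) else 1) else 1) := by
        rw [← Fintype.piFinset_univ]
        exact (Finset.prod_univ_sum (fun _ => (Finset.univ : Finset Bool))
          (fun i b => if i ∈ W then (if b then (-1 : ℝ) else 1) else 1)).symm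
    _ = ∏ i : Fin n, (if i ∈ W then (0 : ℝ) else 2) := by
        refine Finset.prod_congr rfl fun i _ => ?_
        by_cases h : i ∈ W <;> simp [h]
    _ = if W = ∅ then (2 : ℝ) ^ n else 0 := by
        by_cases h : W = ∅
        · simp [h]
        · obtain ⟨i, hi⟩ := Finset.nonempty_iff_ne_empty.2 h
          rw [if_neg h]
          exact Finset.prod_eq_zero (Finset.mem_univ i) (by simp [hi])

lemma sum_eps_mul {n : ℕ} (A B : Finset (Fin n)) :
    ∑ u : X n, eps A (supp n u) * eps B (supp n u)
      = if A = B then (2 : ℝ) ^ n else 0 := by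
  classical
  have key : ∀ u : X n, eps A (supp n u) * eps B (supp n u) = eps (A ∆ B) (supp n u) := by
    intro u
    unfold eps
    rw [show (A ∆ B) ∩ supp n u = (A ∩ supp n u) ∆ (B ∩ supp n u) from by
      simpa [Finset.inf_eq_inter] using
        inf_symmDiff_distrib_right (a := A) (b := B) (c := supp n u)]
    rw [← pow_add]
    have h := card_symmDiff_eq (A ∩ supp n u) (B ∩ supp n u)
    rw [neg_one_pow_eq_pow_mod_two,
      neg_one_pow_eq_pow_mod_two (n := ((A ∩ supp n u) ∆ (B ∩ supp n u)).card)]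
    congr 1
    omega
  rw [Finset.sum_congr rfl fun u _ => key u, sum_eps]
  by_cases h : A = B
  · subst h
    rw [if_pos (by rw [show (∅ : Finset (Fin n)) = ⊥ from rfl, symmDiff_eq_bot]), if_pos rfl]
  · rw [if_neg (by rw [show (∅ : Finset (Fin n)) = ⊥ from rfl, symmDiff_eq_bot]; exact h),
      if_neg h]

/-- expansion of Q at distance via characters -/
lemma Q_dist_eq {n k : ℕ} (u y : X n) :
    Q n k (hammingDist u y)
      = ∑ v ∈ shell n k, eps (supp n v) (supp n u) * eps (supp n v) (supp n y) := by
  rw [hammingDist_eq_card_symmDiff, ← sum_shell_eps]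
  exact Finset.sum_congr rfl fun v _ => eps_symmDiff _ _ _

/-- inclusion indicator expansion -/
lemma sum_powerset_eps {n : ℕ} (S B : Finset (Fin n)) :
    ∑ T ∈ S.powerset, (-1 : ℝ) ^ T.card * (-1) ^ (T ∩ B).card
      = if S ⊆ B then (2 : ℝ) ^ S.card else 0 := by
  classical
  induction S using Finset.induction_on with
  | empty => simp
  | @insert a S ha ih =>
    rw [Finset.sum_powerset_insert ha]
    by_cases hb : a ∈ B
    · have h2 : ∀ T ∈ S.powerset,
          (-1 : ℝ) ^ (insert a T).card * (-1) ^ ((insert a T) ∩ B).card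
            = (-1 : ℝ) ^ T.card * (-1) ^ (T ∩ B).card := by
        intro T hT
        have haT : a ∉ T := fun h => ha ((Finset.mem_powerset.1 hT) h)
        have haTB : a ∉ T ∩ B := fun h => haT (Finset.mem_inter.1 h).1
        rw [Finset.insert_inter_of_mem hb, Finset.card_insert_of_notMem haT,
          Finset.card_insert_of_notMem haTB, pow_succ, pow_succ]
        ring
      rw [Finset.sum_congr rfl h2, ih, Finset.card_insert_of_notMem ha]
      have hsub : insert a S ⊆ B ↔ S ⊆ B := by
        constructor
        · intro h x hx; exact h (Finset.mem_insert_of_mem hx)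
        · intro h; exact Finset.insert_subset hb h
      by_cases hS : S ⊆ B
      · rw [if_pos (hsub.2 hS), if_pos hS]; ring
      · rw [if_neg hS, if_neg (fun h => hS (hsub.1 h))]; ring
    · have h2 : ∀ T ∈ S.powerset,
          (-1 : ℝ) ^ (insert a T).card * (-1) ^ ((insert a T) ∩ B).card
            = -((-1 : ℝ) ^ T.card * (-1) ^ (T ∩ B).card) := by
        intro T hT
        have haT : a ∉ T := fun h => ha ((Finset.mem_powerset.1 hT) h)
        rw [Finset.insert_inter_of_notMem hb, Finset.card_insert_of_notMem haT, pow_succ]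
        ring
      rw [Finset.sum_congr rfl h2]
      have hsub : ¬ (insert a S ⊆ B) := fun h => hb (h (Finset.mem_insert_self a S))
      rw [if_neg hsub, ← Finset.sum_add_distrib]
      simp

/-- Proposition 4.4: a relative `t`-design in `H(n,2)` with respect to
`u₀ = (0,…,0)` is a regular `t`-wise balanced design: for each `j ≤ t` the
weighted number of elements of `Y` whose support contains a fixed `j`-set of
coordinates depends only on `j`. -/
theorem relativeDesign_regular_twise_balanced (n t : ℕ) (Y : Finset (X n))
    (w : X n → ℝ) (R : Finset ℕ) (hdes : IsRelativeDesign n t Y w R) :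
    ∀ j ≤ t, ∃ lam : ℝ, ∀ u : X n, (supp n u).card = j →
      ∑ y ∈ Y.filter (fun y => supp n u ⊆ supp n y), w y = lam := by
  classical
  obtain ⟨-, -, -, hQ⟩ := hdes
  intro j hj
  set c : ℕ → ℝ := fun k => ∑ r ∈ R, Wt n Y w r / (n.choose r : ℝ) * Q n r k with hc
  have h2n : (2 : ℝ) ^ n ≠ 0 := pow_ne_zero n two_ne_zero
  -- Key step: the weighted character sums over Y depend only on the weight of v.
  have key : ∀ v : X n, (supp n v).card ≤ t →
      ∑ y ∈ Y, w y * eps (supp n v) (supp n y) = c (supp n v).card := by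
    intro v hv
    set k := (supp n v).card with hk
    have hvk : v ∈ shell n k := (mem_shell_iff v).2 rfl
    have hE : ∀ x : X n,
        ∑ u : X n, eps (supp n v) (supp n u) * Q n k (hammingDist u x)
          = 2 ^ n * eps (supp n v) (supp n x) := by
      intro x
      calc ∑ u : X n, eps (supp n v) (supp n u) * Q n k (hammingDist u x)
          = ∑ u : X n, ∑ v' ∈ shell n k, eps (supp n v) (supp n u) *
              (eps (supp n v') (supp n u) * eps (supp n v') (supp n x)) := by
            refine Finset.sum_congr rfl fun u _ => ?_
            rw [Q_dist_eq, Finset.mul_sum]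
        _ = ∑ v' ∈ shell n k,
            (∑ u : X n, eps (supp n v) (supp n u) * eps (supp n v') (supp n u)) *
              eps (supp n v') (supp n x) := by
            rw [Finset.sum_comm]
            refine Finset.sum_congr rfl fun v' _ => ?_
            rw [Finset.sum_mul]
            exact Finset.sum_congr rfl fun u _ => by ring
        _ = ∑ v' ∈ shell n k, (if v = v' then (2 : ℝ) ^ n else 0) * eps (supp n v') (supp n x) := by
            refine Finset.sum_congr rfl fun v' _ => ?_
            rw [sum_eps_mul]
            congr 1
            by_cases h : v = v'
            · rw [if_pos (by rw [h]), if_pos h]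
            · rw [if_neg (fun hs => h (supp_injective n hs)), if_neg h]
        _ = 2 ^ n * eps (supp n v) (supp n x) := by
            simp only [ite_mul, zero_mul]
            rw [Finset.sum_ite_eq, if_pos hvk]
    have h1 : ∑ u : X n, eps (supp n v) (supp n u) * ∑ y ∈ Y, w y * Q n k (hammingDist u y)
        = 2 ^ n * ∑ y ∈ Y, w y * eps (supp n v) (supp n y) := by
      calc ∑ u : X n, eps (supp n v) (supp n u) * ∑ y ∈ Y, w y * Q n k (hammingDist u y)
          = ∑ y ∈ Y, w y * ∑ u : X n, eps (supp n v) (supp n u) * Q n k (hammingDist u y) := by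
            simp_rw [Finset.mul_sum]
            rw [Finset.sum_comm]
            exact Finset.sum_congr rfl fun y _ => Finset.sum_congr rfl fun u _ => by ring
        _ = ∑ y ∈ Y, w y * (2 ^ n * eps (supp n v) (supp n y)) :=
            Finset.sum_congr rfl fun y _ => by rw [hE y]
        _ = 2 ^ n * ∑ y ∈ Y, w y * eps (supp n v) (supp n y) := by
            rw [Finset.mul_sum]
            exact Finset.sum_congr rfl fun y _ => by ring
    have h2 : ∑ u : X n, eps (supp n v) (supp n u) *
          ∑ r ∈ R, Wt n Y w r / (n.choose r : ℝ) * ∑ x ∈ shell n r, Q n k (hammingDist u x)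
        = 2 ^ n * c k := by
      have hswap : ∀ u : X n, eps (supp n v) (supp n u) *
            ∑ r ∈ R, Wt n Y w r / (n.choose r : ℝ) * ∑ x ∈ shell n r, Q n k (hammingDist u x)
          = ∑ r ∈ R, ∑ x ∈ shell n r, Wt n Y w r / (n.choose r : ℝ) *
              (eps (supp n v) (supp n u) * Q n k (hammingDist u x)) := by
        intro u
        rw [Finset.mul_sum]
        refine Finset.sum_congr rfl fun r _ => ?_
        rw [Finset.mul_sum, Finset.mul_sum]
        exact Finset.sum_congr rfl fun x _ => by ring
      rw [Finset.sum_congr rfl fun u _ => hswap u, Finset.sum_comm, hc, Finset.mul_sum]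
      refine Finset.sum_congr rfl fun r _ => ?_
      rw [Finset.sum_comm]
      calc ∑ x ∈ shell n r, ∑ u : X n, Wt n Y w r / (n.choose r : ℝ) *
            (eps (supp n v) (supp n u) * Q n k (hammingDist u x))
          = ∑ x ∈ shell n r, Wt n Y w r / (n.choose r : ℝ) *
              (2 ^ n * eps (supp n v) (supp n x)) := by
            refine Finset.sum_congr rfl fun x _ => ?_
            rw [← Finset.mul_sum, hE x]
        _ = ∑ x ∈ shell n r, 2 ^ n * (Wt n Y w r / (n.choose r : ℝ)) * eps (supp n x) (supp n v) := by
            refine Finset.sum_congr rfl fun x _ => ?_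
            rw [eps_comm]
            ring
        _ = 2 ^ n * (Wt n Y w r / (n.choose r : ℝ) * Q n r k) := by
            rw [← Finset.mul_sum, sum_shell_eps (supp n v), ← hk]
            ring
    have heq : 2 ^ n * ∑ y ∈ Y, w y * eps (supp n v) (supp n y) = 2 ^ n * c k := by
      rw [← h1, ← h2]
      exact Finset.sum_congr rfl fun u _ => by rw [hQ k hv u]
    exact mul_left_cancel₀ h2n heq
  -- Final assembly.
  refine ⟨(∑ i ∈ Finset.range (j + 1), (j.choose i) • ((-1 : ℝ) ^ i * c i)) / 2 ^ j, ?_⟩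
  intro u hu
  have h2j : (2 : ℝ) ^ j * ∑ y ∈ Y.filter (fun y => supp n u ⊆ supp n y), w y
      = ∑ i ∈ Finset.range (j + 1), (j.choose i) • ((-1 : ℝ) ^ i * c i) := by
    rw [Finset.sum_filter, Finset.mul_sum]
    calc ∑ y ∈ Y, (2 : ℝ) ^ j * (if supp n u ⊆ supp n y then w y else 0)
        = ∑ y ∈ Y, w y * ∑ T ∈ (supp n u).powerset,
            (-1 : ℝ) ^ T.card * (-1) ^ (T ∩ supp n y).card := by
          refine Finset.sum_congr rfl fun y _ => ?_
          rw [sum_powerset_eps, hu]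
          by_cases h : supp n u ⊆ supp n y
          · rw [if_pos h, if_pos h]; ring
          · rw [if_neg h, if_neg h]; ring
      _ = ∑ T ∈ (supp n u).powerset, (-1 : ℝ) ^ T.card * ∑ y ∈ Y, w y * eps T (supp n y) := by
          simp_rw [Finset.mul_sum]
          rw [Finset.sum_comm]
          refine Finset.sum_congr rfl fun T _ => Finset.sum_congr rfl fun y _ => ?_
          show w y * ((-1 : ℝ) ^ T.card * (-1) ^ (T ∩ supp n y).card)
            = (-1 : ℝ) ^ T.card * (w y * eps T (supp n y))
          unfold eps
          ring
      _ = ∑ T ∈ (supp n u).powerset, (-1 : ℝ) ^ T.card * c T.card := by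
          refine Finset.sum_congr rfl fun T hT => ?_
          congr 1
          have hTcard : T.card ≤ t := by
            have := Finset.card_le_card (Finset.mem_powerset.1 hT)
            omega
          have := key (fun i => decide (i ∈ T)) (by rw [supp_of_mem]; exact hTcard)
          rw [supp_of_mem] at this
          exact this
      _ = ∑ i ∈ Finset.range (j + 1), (j.choose i) • ((-1 : ℝ) ^ i * c i) := by
          have := Finset.sum_powerset_apply_card (f := fun i => (-1 : ℝ) ^ i * c i)
            (x := supp n u)
          rw [hu] at this
          rw [← this]
  rw [eq_div_iff (pow_ne_zero j (two_ne_zero : (2:ℝ) ≠ 0)), ← h2j]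
  ring
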